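/- The infinite series ∑_{k=0}^∞ k! / (2k+1)!! equals π/2, where (2k+1)!! = (2k+1)!/(2^k k!). -/

import Mathlib

open Real

noncomputable def poch (x : ℝ) (k : ℕ) : ℝ := ∏ i ∈ Finset.range k, (x + i)

noncomputable def H2 (n : ℕ) : ℝ := ∑ i ∈ Finset.range n, 1 / ((i : ℝ) + 1) ^ 2

noncomputable def oddDoubleFact (k : ℕ) : ℝ := ((2 * k + 1).factorial : ℝ) / (2 ^ k * k.factorial)

/-!
Since `(k!)² / (2k+1)!` is the Beta integral `∫₀¹ xᵏ (1-x)ᵏ dx`, the `k`-th term of the series is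
`∫₀¹ (2x(1-x))ᵏ dx`. As `0 ≤ 2x(1-x) ≤ 1/2` on `[0, 1]`, the geometric series may be summed under
the integral, leaving `∫₀¹ dx / (1 - 2x(1-x)) = ∫₋₁¹ du / (1 + u²) = π / 2` with `u = 2x - 1`.
-/

open Set MeasureTheory
open scoped Nat Interval

theorem integral_pow_mul_one_sub_pow (m n : ℕ) :
    ∫ x in (0 : ℝ)..1, x ^ m * (1 - x) ^ n = m ! * n ! / (m + n + 1)! := by
  have hβ := Complex.betaIntegral_eq_Gamma_mul_div (m + 1) (n + 1)
    (by simp only [Complex.add_re, Complex.natCast_re, Complex.one_re]; positivity)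
    (by simp only [Complex.add_re, Complex.natCast_re, Complex.one_re]; positivity)
  rw [show (m + 1 : ℂ) + (n + 1) = ((m + n + 1 : ℕ) : ℂ) + 1 by push_cast; ring,
    Complex.Gamma_nat_eq_factorial, Complex.Gamma_nat_eq_factorial,
    Complex.Gamma_nat_eq_factorial, Complex.betaIntegral] at hβ
  simp only [add_sub_cancel_right, Complex.cpow_natCast] at hβ
  have hcast : ((∫ x in (0 : ℝ)..1, x ^ m * (1 - x) ^ n : ℝ) : ℂ) =
      ∫ x in (0 : ℝ)..1, (x : ℂ) ^ m * (1 - (x : ℂ)) ^ n := by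
    rw [← intervalIntegral.integral_ofReal]
    push_cast
    rfl
  apply Complex.ofReal_injective
  rw [hcast, hβ]
  push_cast
  rfl

theorem factorial_div_oddDoubleFact_eq_integral (k : ℕ) :
    k ! / oddDoubleFact k = ∫ x in (0 : ℝ)..1, (2 * x * (1 - x)) ^ k := by
  simp only [mul_assoc, mul_pow, intervalIntegral.integral_const_mul,
    integral_pow_mul_one_sub_pow, oddDoubleFact]
  rw [← two_mul]
  field_simp

theorem tsum_integral_pow_eq_integral_inv_one_sub {f : ℝ → ℝ} {a b c : ℝ}
    (hf : ContinuousOn f (uIcc a b)) (hc : c < 1) (hfc : ∀ x ∈ uIcc a b, |f x| ≤ c) :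
    ∑' k : ℕ, ∫ x in a..b, f x ^ k = ∫ x in a..b, (1 - f x)⁻¹ := by
  have hfc_uIoc : ∀ x ∈ Ι a b, |f x| ≤ c := fun x hx => hfc x (uIoc_subset_uIcc hx)
  refine (intervalIntegral.hasSum_integral_of_dominated_convergence (fun k _ => c ^ k)
    (fun k => ((hf.pow k).aestronglyMeasurable measurableSet_uIcc).mono_set uIoc_subset_uIcc)
    (fun k => ae_of_all _ fun x hx => ?_)
    (ae_of_all _ fun x hx => summable_geometric_of_lt_one ((abs_nonneg _).trans (hfc_uIoc x hx)) hc)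
    intervalIntegrable_const
    (ae_of_all _ fun x hx => hasSum_geometric_of_abs_lt_one ((hfc_uIoc x hx).trans_lt hc))).tsum_eq
  rw [Pi.pow_apply, norm_pow, Real.norm_eq_abs]
  exact pow_le_pow_left₀ (abs_nonneg _) (hfc_uIoc x hx) k

theorem integral_inv_one_sub_two_mul_mul_one_sub :
    ∫ x in (0 : ℝ)..1, (1 - 2 * x * (1 - x))⁻¹ = π / 2 := by
  have h : ∀ x : ℝ, (1 - 2 * x * (1 - x))⁻¹ = 2 * (1 + (2 * x + -1) ^ 2)⁻¹ := fun x => by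
    rw [show 1 + (2 * x + -1) ^ 2 = 2 * (1 - 2 * x * (1 - x)) by ring, mul_inv,
      mul_inv_cancel_left₀ two_ne_zero]
  simp only [h, intervalIntegral.integral_const_mul,
    intervalIntegral.integral_comp_mul_add (fun u => (1 + u ^ 2)⁻¹) two_ne_zero]
  norm_num [← one_div, integral_one_div_one_add_sq]
  ring

theorem stmt3 :
    ∑' k : ℕ, (k.factorial : ℝ) / oddDoubleFact k = π / 2 := by
  have hbound : ∀ x ∈ uIcc (0 : ℝ) 1, |2 * x * (1 - x)| ≤ 1 / 2 := by
    intro x hx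
    rw [uIcc_of_le zero_le_one] at hx
    rw [abs_le]
    constructor <;> nlinarith [hx.1, hx.2, sq_nonneg (2 * x - 1)]
  simp only [factorial_div_oddDoubleFact_eq_integral]
  rw [tsum_integral_pow_eq_integral_inv_one_sub (by fun_prop) (by norm_num) hbound,
    integral_inv_one_sub_two_mul_mul_one_sub]
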